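/- Let b ∈ ℂ, q ≥ 1 an integer, r₀ > 0, and let f be holomorphic on the punctured disk {z : 0 < |z - b| < r₀} with f(z) = g(z)/(z - b)^q, where g is holomorphic on the disk {z : |z - b| < r₀} and g(b) ≠ 0. Then there exist r ∈ (0, r₀] and constants c₁, c₂ > 0 such that for all z with 0 < |z - b| < r one has c₁ |f(z)|^{1 + 1/q} ≤ |f'(z)| ≤ c₂ |f(z)|^{1 + 1/q}. -/

import Mathlib

/-! Near `b` one has `f' = h / (z - b) ^ (q + 1)` with `h = g' · (z - b) - q g`, while
`|f| ^ (1 + 1/q) = |g| ^ (1 + 1/q) / |z - b| ^ (q + 1)`. Hence `|f'| / |f| ^ (1 + 1/q)` equals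
`|h| / |g| ^ (1 + 1/q)`, and since `h` and `g` are continuous at `b` with `h b = -q g b ≠ 0`,
this ratio is bounded above and away from zero near `b`. -/

open Filter Topology

theorem hasDerivAt_div_sub_pow {𝕜 : Type*} [NontriviallyNormedField 𝕜] {g : 𝕜 → 𝕜} {b z : 𝕜}
    (q : ℕ) (hg : DifferentiableAt 𝕜 g z) (hz : z ≠ b) :
    HasDerivAt (fun w => g w / (w - b) ^ q)
      ((deriv g z * (z - b) - q * g z) / (z - b) ^ (q + 1)) z := by
  have hzb : z - b ≠ 0 := sub_ne_zero.mpr hz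
  refine (hg.hasDerivAt.div (((hasDerivAt_id' z).sub_const b).pow q)
    (pow_ne_zero q hzb)).congr_deriv ?_
  rcases q with _ | q
  · simp [field]
  · simp only [Pi.pow_apply, Nat.add_sub_cancel, mul_one]
    field_simp
    ring

theorem Real.div_pow_rpow_one_add_one_div {a t : ℝ} (ha : 0 ≤ a) (ht : 0 ≤ t) {q : ℕ}
    (hq : q ≠ 0) : (a / t ^ q) ^ (1 + 1 / (q : ℝ)) = a ^ (1 + 1 / (q : ℝ)) / t ^ (q + 1) := by
  have hq' : (q : ℝ) ≠ 0 := Nat.cast_ne_zero.mpr hq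
  rw [Real.div_rpow ha (by positivity), ← Real.rpow_natCast_mul ht,
    ← Real.rpow_natCast t (q + 1)]
  congr 2
  push_cast
  field_simp

theorem exists_norm_comparable_rpow {X E F : Type*} [TopologicalSpace X] [NormedAddCommGroup E]
    [NormedAddCommGroup F] {u : X → E} {v : X → F} {x : X} {e : ℝ}
    (hu : ContinuousAt u x) (hux : u x ≠ 0) (hv : ContinuousAt v x) (hvx : v x ≠ 0) (he : 0 ≤ e) :
    ∃ c₁ c₂ : ℝ, 0 < c₁ ∧ 0 < c₂ ∧
      ∀ᶠ y in 𝓝 x, c₁ * ‖v y‖ ^ e ≤ ‖u y‖ ∧ ‖u y‖ ≤ c₂ * ‖v y‖ ^ e := by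
  set A := ‖u x‖
  set B := ‖v x‖
  have hA : 0 < A := norm_pos_iff.mpr hux
  have hB : 0 < B := norm_pos_iff.mpr hvx
  have hu_near : ∀ᶠ y in 𝓝 x, ‖u y‖ ∈ Set.Ioo (A / 2) (2 * A) :=
    hu.norm.eventually (Ioo_mem_nhds (by linarith) (by linarith))
  have hv_near : ∀ᶠ y in 𝓝 x, ‖v y‖ ∈ Set.Ioo (B / 2) (2 * B) :=
    hv.norm.eventually (Ioo_mem_nhds (by linarith) (by linarith))
  refine ⟨A / 2 / (2 * B) ^ e, 2 * A / (B / 2) ^ e, by positivity, by positivity, ?_⟩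
  filter_upwards [hu_near, hv_near] with y ⟨huy₁, huy₂⟩ ⟨hvy₁, hvy₂⟩
  constructor
  · rw [div_mul_eq_mul_div, div_le_iff₀ (by positivity)]
    gcongr
  · rw [div_mul_eq_mul_div, le_div_iff₀ (by positivity)]
    gcongr

theorem pole_deriv_vs_value_estimate_general (b : ℂ) (q : ℕ) (hq : 1 ≤ q) (r₀ : ℝ) (hr₀ : 0 < r₀)
    (f g : ℂ → ℂ)
    (hg : DifferentiableOn ℂ g (Metric.ball b r₀))
    (hgb : g b ≠ 0)
    (hfg : ∀ z, 0 < ‖z - b‖ → ‖z - b‖ < r₀ →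
      f z = g z / (z - b) ^ q) :
    ∃ r : ℝ, 0 < r ∧ r ≤ r₀ ∧ ∃ c₁ c₂ : ℝ, 0 < c₁ ∧ 0 < c₂ ∧
      ∀ z : ℂ, 0 < ‖z - b‖ → ‖z - b‖ < r →
        c₁ * ‖f z‖ ^ (1 + 1 / (q : ℝ)) ≤ ‖deriv f z‖ ∧
        ‖deriv f z‖ ≤ c₂ * ‖f z‖ ^ (1 + 1 / (q : ℝ)) := by
  have hq0 : q ≠ 0 := Nat.one_le_iff_ne_zero.mp hq
  have hball : Metric.ball b r₀ ∈ 𝓝 b := Metric.ball_mem_nhds b hr₀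
  have hgc : ContinuousAt g b := hg.continuousOn.continuousAt hball
  set h : ℂ → ℂ := fun z => deriv g z * (z - b) - q * g z
  have hhc : ContinuousAt h b :=
    (((hg.deriv Metric.isOpen_ball).continuousOn.continuousAt hball).mul
      (continuousAt_id.sub continuousAt_const)).sub (continuousAt_const.mul hgc)
  have hhb : h b ≠ 0 := by simp [h, hq0, hgb]
  obtain ⟨c₁, c₂, hc₁, hc₂, hcomp⟩ := exists_norm_comparable_rpow hhc hhb hgc hgb
    (by positivity : (0 : ℝ) ≤ 1 + 1 / (q : ℝ))
  obtain ⟨δ, hδ, hδcomp⟩ := Metric.eventually_nhds_iff_ball.mp hcomp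
  refine ⟨min δ r₀, lt_min hδ hr₀, min_le_right _ _, c₁, c₂, hc₁, hc₂, fun z hz₀ hzr => ?_⟩
  have hzr₀ : ‖z - b‖ < r₀ := hzr.trans_le (min_le_right _ _)
  have hzb : z ≠ b := sub_ne_zero.mp (norm_pos_iff.mp hz₀)
  have hf_eq : f =ᶠ[𝓝 z] fun w => g w / (w - b) ^ q := by
    filter_upwards [eventually_ne_nhds hzb, Metric.isOpen_ball.mem_nhds (mem_ball_iff_norm.mpr hzr₀)]
      with w hwb hwr
    exact hfg w (norm_pos_iff.mpr (sub_ne_zero.mpr hwb)) (mem_ball_iff_norm.mp hwr)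
  have hderiv : ‖deriv f z‖ = ‖h z‖ / ‖z - b‖ ^ (q + 1) := by
    rw [hf_eq.deriv_eq, (hasDerivAt_div_sub_pow q
      (hg.differentiableAt (Metric.isOpen_ball.mem_nhds (mem_ball_iff_norm.mpr hzr₀))) hzb).deriv,
      norm_div, norm_pow]
  have hvalue : ‖f z‖ ^ (1 + 1 / (q : ℝ)) = ‖g z‖ ^ (1 + 1 / (q : ℝ)) / ‖z - b‖ ^ (q + 1) := by
    rw [hfg z hz₀ hzr₀, norm_div, norm_pow,
      Real.div_pow_rpow_one_add_one_div (norm_nonneg _) (norm_nonneg _) hq0]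
  obtain ⟨hlow, hup⟩ := hδcomp z (mem_ball_iff_norm.mpr (hzr.trans_le (min_le_left _ _)))
  rw [hderiv, hvalue, ← mul_div_assoc, ← mul_div_assoc]
  exact ⟨by gcongr, by gcongr⟩

/-- If `f` is holomorphic on the punctured disk of radius `r₀` around `b`
and has a pole of order `q` at `b`, then there are `r ∈ (0, r₀]` and constants
`c₁, c₂ > 0` with `c₁ * |f z| ^ (1 + 1/q) ≤ |f' z| ≤ c₂ * |f z| ^ (1 + 1/q)`
for `0 < |z - b| < r`. -/
theorem pole_deriv_vs_value_estimate (b : ℂ) (q : ℕ) (hq : 1 ≤ q) (r₀ : ℝ) (hr₀ : 0 < r₀)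
    (f g : ℂ → ℂ)
    (hf : DifferentiableOn ℂ f {z | 0 < ‖z - b‖ ∧ ‖z - b‖ < r₀})
    (hg : DifferentiableOn ℂ g (Metric.ball b r₀))
    (hgb : g b ≠ 0)
    (hfg : ∀ z, 0 < ‖z - b‖ → ‖z - b‖ < r₀ →
      f z = g z / (z - b) ^ q) :
    ∃ r : ℝ, 0 < r ∧ r ≤ r₀ ∧ ∃ c₁ c₂ : ℝ, 0 < c₁ ∧ 0 < c₂ ∧
      ∀ z : ℂ, 0 < ‖z - b‖ → ‖z - b‖ < r →
        c₁ * ‖f z‖ ^ (1 + 1 / (q : ℝ)) ≤ ‖deriv f z‖ ∧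
        ‖deriv f z‖ ≤ c₂ * ‖f z‖ ^ (1 + 1 / (q : ℝ)) :=
  pole_deriv_vs_value_estimate_general b q hq r₀ hr₀ f g hg hgb hfg
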